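/- arXiv:2001.09814 — 2 statements merged into one kernel-verified Lean document; each statement's English description precedes it below -/
import Mathlib

section
/- Let p be an odd prime, n an integer with p ∤ n, and k ≥ 1. Then τ(n, p^{k+1}) = (τ(n, p^k) − s_p(n))·p + s_p(n)·(p+1)/2 if k is even, and τ(n, p^{k+1}) = (τ(n, p^k) − s_p(n))·p + s_p(n) if k is odd. -/
/-!
Sort the targets `(a, n + a)` modulo `p^k` by the residue of `a` modulo `p`. For odd `p` the kernel
of `(ℤ/p^k)ˣ → (ℤ/p)ˣ` has odd order `p^(k-1)`, so a unit is a square iff its residue is one. Hence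
the targets with `a` and `n + a` both units number `N · p^(k-1)`, where `N` only depends on `n`
modulo `p`, while those with `p ∣ a` (resp. `p ∣ n + a`) exist only if `n` (resp. `-n`) is a square
modulo `p`, and are then counted by `Z k`, the number of squares modulo `p^k` divisible by `p`. So
`τ(n, p^k) = N p^(k-1) + s_p(n) Z k`, and the theorem reduces to `Z (k+1) + p = p Z k + c`, with
`c = (p+1)/2` or `1` according to the parity of `k`. Since a square divisible by `p` is `p²` times a
square, `Z (k+2)` is the number of squares modulo `p^k`, which is `Z k + (p-1)/2 · p^(k-1)`; this
makes `Z (k+1) - p Z k` periodic of period `2`, and the first two values are checked directly.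
-/

/-- `(a,b)` is a target for `n` modulus `c`: `a` and `b` are squares in `ℤ/cℤ`
(zero allowed) and `n + a = b` in `ℤ/cℤ`. -/
def IsTarget (n : ℤ) (c : ℕ) (a b : ZMod c) : Prop :=
  IsSquare a ∧ IsSquare b ∧ (n : ZMod c) + a = b

/-- `τ(n,c)`, the number of targets for `n` modulus `c`. -/
noncomputable def tau (n : ℤ) (c : ℕ) : ℕ :=
  ({ab : ZMod c × ZMod c | IsTarget n c ab.1 ab.2}).ncard

open Finset

theorem IsSquare.of_map_of_odd_card_ker {G H : Type*} [CommGroup G] [Group H] {f : G →* H}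
    (hf : Function.Surjective f) (hker : Odd (Nat.card f.ker)) {g : G} (h : IsSquare (f g)) :
    IsSquare g := by
  obtain ⟨w, hw⟩ := h
  obtain ⟨v, rfl⟩ := hf w
  set x := g * (v * v)⁻¹
  have hx : x ∈ f.ker := by simp [x, hw]
  obtain ⟨t, ht⟩ := hker
  have hsq : x ^ (t + 1) * x ^ (t + 1) = x := by
    have : x ^ (2 * t + 1) = 1 := by
      rw [← ht]; exact congrArg Subtype.val (pow_card_eq_one' (x := (⟨x, hx⟩ : f.ker)))
    rw [← pow_add, show t + 1 + (t + 1) = 2 * t + 1 + 1 by ring, pow_succ, this, one_mul]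
  refine ⟨x ^ (t + 1) * v, ?_⟩
  rw [mul_mul_mul_comm, hsq, inv_mul_cancel_right]

theorem Units.isSquare_val_iff {M : Type*} [CommMonoid M] (u : Mˣ) :
    IsSquare (u : M) ↔ IsSquare u := by
  refine ⟨fun ⟨x, hx⟩ => ?_, fun h => h.map (Units.coeHom M)⟩
  obtain ⟨v, rfl⟩ := isUnit_of_mul_isUnit_left (hx ▸ u.isUnit)
  exact ⟨v, Units.ext hx⟩

theorem FiniteField.two_mul_ncard_nonzero_squares_add_one {F : Type*} [Field F] [Fintype F]
    (hF : ringChar F ≠ 2) :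
    2 * {a : F | a ≠ 0 ∧ IsSquare a}.ncard + 1 = Fintype.card F := by
  have hsq : {a : F | a ≠ 0 ∧ IsSquare a} =
      (↑) '' ((powMonoidHom 2 : Fˣ →* Fˣ).range : Set Fˣ) := by
    ext a
    constructor
    · rintro ⟨ha, b, rfl⟩
      have hb : b ≠ 0 := by rintro rfl; simp at ha
      exact ⟨Units.mk0 b hb ^ 2, ⟨_, rfl⟩, by simp [sq]⟩
    · rintro ⟨_, ⟨u, rfl⟩, rfl⟩
      exact ⟨by simp, u, by simp [sq]⟩
  have hcard := IsCyclic.card_powMonoidHom_range (G := Fˣ) 2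
  have hodd := FiniteField.odd_card_of_char_ne_two hF
  rw [Nat.card_units, Nat.card_eq_fintype_card (α := F)] at hcard
  rw [hsq, Set.ncard_image_of_injective _ Units.val_injective, ← Nat.card_coe_set_eq,
    SetLike.coe_sort_coe, hcard, Nat.gcd_eq_right (by omega)]
  omega

namespace ZMod

variable {c d : ℕ}

lemma card_filter_castHom_eq [NeZero c] (h : d ∣ c) (r : ZMod d) :
    #{a : ZMod c | castHom h (ZMod d) a = r} = c / d := by
  classical
  have : NeZero d := ⟨ne_zero_of_dvd_ne_zero (NeZero.ne c) h⟩
  have hsurj := castHom_surjective h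
  have hsum := card_eq_sum_card_fiberwise (f := castHom h (ZMod d)) (s := univ) (t := univ)
    fun _ _ => mem_univ _
  rw [sum_congr rfl fun s _ => AddMonoidHom.card_fiber_eq_of_mem_range (castHom h (ZMod d))
    (hsurj s) (hsurj r), sum_const, card_univ, card_univ, ZMod.card, ZMod.card, smul_eq_mul] at hsum
  exact (Nat.div_eq_of_eq_mul_right (NeZero.pos d) hsum).symm

lemma ncard_preimage_castHom [NeZero c] (h : d ∣ c) (T : Set (ZMod d)) :
    (castHom h (ZMod d) ⁻¹' T).ncard = T.ncard * (c / d) := by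
  classical
  have : NeZero d := ⟨ne_zero_of_dvd_ne_zero (NeZero.ne c) h⟩
  rw [Set.ncard_eq_toFinset_card _ (Set.toFinite _), Set.ncard_eq_toFinset_card _ (Set.toFinite T),
    card_eq_sum_card_fiberwise (f := castHom h (ZMod d)) (t := (Set.toFinite T).toFinset)
      fun a ha => by
        simpa only [Finset.mem_coe, Set.Finite.mem_toFinset, Set.mem_preimage] using ha,
    sum_congr rfl fun r hr => ?_, sum_const, smul_eq_mul]
  rw [← card_filter_castHom_eq h r]
  congr 1
  ext a
  simp only [Set.Finite.mem_toFinset, Set.mem_preimage, mem_filter, mem_univ, true_and]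
  exact ⟨fun h => h.2, fun ha => ⟨ha ▸ (Set.Finite.mem_toFinset _).1 hr, ha⟩⟩

lemma card_ker_unitsMap_mul_totient [NeZero c] (h : d ∣ c) :
    Nat.card (unitsMap h).ker * d.totient = c.totient := by
  have : NeZero d := ⟨ne_zero_of_dvd_ne_zero (NeZero.ne c) h⟩
  rw [← card_units_eq_totient, ← card_units_eq_totient, ← Nat.card_eq_fintype_card,
    ← Nat.card_eq_fintype_card, Subgroup.card_eq_card_quotient_mul_card_subgroup (unitsMap h).ker,
    Nat.card_congr (QuotientGroup.quotientKerEquivOfSurjective _ (unitsMap_surjective h)).toEquiv,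
    mul_comm]

end ZMod

abbrev residue (p m : ℕ) : ZMod (p ^ (m + 1)) →+* ZMod p :=
  ZMod.castHom (dvd_pow_self p m.succ_ne_zero) (ZMod p)

noncomputable def numSquares (c : ℕ) : ℕ := {a : ZMod c | IsSquare a}.ncard

noncomputable def numSquaresDvd (p m : ℕ) : ℕ :=
  {a : ZMod (p ^ (m + 1)) | IsSquare a ∧ residue p m a = 0}.ncard

/-- Multiplication by `p²`, through any lift: `p² y` modulo `p^(j+2)` only depends on `y` modulo
`p^j`. -/
def mulPrimeSq (p j : ℕ) (t : ZMod (p ^ j)) : ZMod (p ^ (j + 2)) :=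
  p ^ 2 * (t.val : ZMod (p ^ (j + 2)))

section PrimePower

variable {p : ℕ} [hp : Fact p.Prime]

lemma ncard_preimage_residue (m : ℕ) (T : Set (ZMod p)) :
    (residue p m ⁻¹' T).ncard = T.ncard * p ^ m := by
  rw [ZMod.ncard_preimage_castHom, pow_succ, Nat.mul_div_cancel _ hp.out.pos]

lemma card_ker_unitsMap_primePow (m : ℕ) :
    Nat.card (ZMod.unitsMap (dvd_pow_self p m.succ_ne_zero)).ker = p ^ m := by
  have h := ZMod.card_ker_unitsMap_mul_totient (dvd_pow_self p m.succ_ne_zero)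
  rw [Nat.totient_prime_pow_succ hp.out, Nat.totient_prime hp.out] at h
  exact Nat.eq_of_mul_eq_mul_right (Nat.sub_pos_of_lt hp.out.one_lt) h

lemma residue_eq_zero_iff {m : ℕ} (a : ZMod (p ^ (m + 1))) :
    residue p m a = 0 ↔ p ∣ a.val := by
  conv_lhs => rw [← ZMod.natCast_zmod_val a]
  rw [map_natCast, ZMod.natCast_eq_zero_iff]

lemma isUnit_iff_residue_ne_zero {m : ℕ} (a : ZMod (p ^ (m + 1))) :
    IsUnit a ↔ residue p m a ≠ 0 := by
  rw [Ne, residue_eq_zero_iff, ← ZMod.isUnit_natCast_iff_not_dvd_pow hp.out m.succ_pos,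
    ZMod.natCast_zmod_val]

lemma isSquare_iff_isSquare_residue (hodd : p ≠ 2) {m : ℕ} {a : ZMod (p ^ (m + 1))}
    (ha : residue p m a ≠ 0) : IsSquare a ↔ IsSquare (residue p m a) := by
  obtain ⟨u, rfl⟩ := (isUnit_iff_residue_ne_zero a).2 ha
  change _ ↔ IsSquare ((ZMod.unitsMap (dvd_pow_self p m.succ_ne_zero) u : (ZMod p)ˣ) : ZMod p)
  rw [Units.isSquare_val_iff, Units.isSquare_val_iff]
  refine ⟨fun h => h.map _, IsSquare.of_map_of_odd_card_ker (ZMod.unitsMap_surjective _) ?_⟩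
  rw [card_ker_unitsMap_primePow]
  exact (hp.out.odd_of_ne_two hodd).pow

lemma mulPrimeSq_injective (j : ℕ) : Function.Injective (mulPrimeSq p j) := by
  intro s t hst
  have key : p ^ 2 * s.val ≡ p ^ 2 * t.val [MOD p ^ 2 * p ^ j] := by
    rw [← pow_add, add_comm, ← ZMod.natCast_eq_natCast_iff]
    push_cast
    exact hst
  rw [← ZMod.natCast_zmod_val s, ← ZMod.natCast_zmod_val t, ZMod.natCast_eq_natCast_iff]
  exact Nat.ModEq.mul_left_cancel' (pow_ne_zero _ hp.out.ne_zero) key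

lemma mulPrimeSq_castHom (j : ℕ) (x : ZMod (p ^ (j + 2))) :
    mulPrimeSq p j (ZMod.castHom (pow_dvd_pow p (j.le_add_right 2)) _ x) = p ^ 2 * x := by
  obtain ⟨v, rfl⟩ : ∃ v : ℕ, (v : ZMod (p ^ (j + 2))) = x := ⟨x.val, ZMod.natCast_zmod_val x⟩
  have key := (Nat.mod_modEq v (p ^ j)).mul_left' (p ^ 2)
  rw [← pow_add, add_comm, ← ZMod.natCast_eq_natCast_iff] at key
  rw [mulPrimeSq, map_natCast, ZMod.val_natCast]
  exact_mod_cast key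

lemma numSquaresDvd_zero : numSquaresDvd p 0 = 1 := by
  rw [numSquaresDvd, Set.ncard_eq_one]
  refine ⟨0, Set.eq_singleton_iff_unique_mem.2 ⟨⟨.zero, map_zero _⟩, ?_⟩⟩
  rintro a ⟨-, ha⟩
  rw [residue_eq_zero_iff] at ha
  have hlt : a.val < p := by simpa using ZMod.val_lt a
  exact (ZMod.val_eq_zero a).1 (Nat.eq_zero_of_dvd_of_lt ha hlt)

lemma numSquaresDvd_succ (j : ℕ) : numSquaresDvd p (j + 1) = numSquares (p ^ j) := by
  set π := ZMod.castHom (pow_dvd_pow p (j.le_add_right 2)) (ZMod (p ^ j))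
  have himage : {a : ZMod (p ^ (j + 2)) | IsSquare a ∧ residue p (j + 1) a = 0} =
      mulPrimeSq p j '' {t | IsSquare t} := by
    ext a
    constructor
    · rintro ⟨⟨x, rfl⟩, hx⟩
      rw [map_mul, mul_self_eq_zero, residue_eq_zero_iff] at hx
      obtain ⟨y, hy⟩ := hx
      refine ⟨π y * π y, ⟨π y, rfl⟩, ?_⟩
      rw [← map_mul, mulPrimeSq_castHom, ← ZMod.natCast_zmod_val x, hy]
      push_cast
      ring
    · rintro ⟨_, ⟨s, rfl⟩, rfl⟩
      obtain ⟨y, rfl⟩ : ∃ y, π y = s := ZMod.castHom_surjective _ s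
      rw [← map_mul, mulPrimeSq_castHom]
      refine ⟨⟨p * y, by ring⟩, ?_⟩
      rw [map_mul, map_pow, map_natCast, ZMod.natCast_self, zero_pow two_ne_zero, zero_mul]
  rw [numSquaresDvd, himage, Set.ncard_image_of_injective _ (mulPrimeSq_injective j), numSquares]

lemma numSquares_one : numSquares 1 = 1 :=
  Set.ncard_eq_one.2
    ⟨0, Set.eq_singleton_iff_unique_mem.2 ⟨.zero, fun a _ => Subsingleton.elim a 0⟩⟩

lemma numSquares_primePow_succ (hodd : p ≠ 2) (m : ℕ) :
    numSquares (p ^ (m + 1)) =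
      numSquaresDvd p m + {r : ZMod p | r ≠ 0 ∧ IsSquare r}.ncard * p ^ m := by
  have hsplit : {a : ZMod (p ^ (m + 1)) | IsSquare a} =
      {a | IsSquare a ∧ residue p m a = 0} ∪ residue p m ⁻¹' {r | r ≠ 0 ∧ IsSquare r} := by
    ext a
    by_cases ha : residue p m a = 0
    · simp only [Set.mem_ofPred_eq, Set.mem_union, Set.mem_preimage, ha, and_true, ne_eq,
        not_true_eq_false, false_and, or_false]
    · simp only [Set.mem_ofPred_eq, Set.mem_union, Set.mem_preimage, ha, and_false, ne_eq,
        not_false_eq_true, true_and, false_or, isSquare_iff_isSquare_residue hodd ha]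
  rw [numSquares, hsplit, Set.ncard_union_eq, ncard_preimage_residue, numSquaresDvd]
  exact Set.disjoint_left.2 fun a h₁ h₂ => h₂.1 h₁.2

lemma numSquaresDvd_add_two (hodd : p ≠ 2) (m : ℕ) :
    numSquaresDvd p (m + 2) =
      numSquaresDvd p m + {r : ZMod p | r ≠ 0 ∧ IsSquare r}.ncard * p ^ m := by
  rw [numSquaresDvd_succ, numSquares_primePow_succ hodd]

lemma numSquaresDvd_succ_add (hodd : p ≠ 2) :
    ∀ m : ℕ, numSquaresDvd p (m + 1) + p =
      p * numSquaresDvd p m + if Even (m + 1) then (p + 1) / 2 else 1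
  | 0 => by
    rw [numSquaresDvd_succ, pow_zero, numSquares_one, numSquaresDvd_zero, if_neg (by decide)]
    ring
  | 1 => by
    have he := FiniteField.two_mul_ncard_nonzero_squares_add_one
      (F := ZMod p) (by rwa [ZMod.ringChar_zmod_n])
    rw [ZMod.card] at he
    rw [numSquaresDvd_add_two hodd 0, numSquaresDvd_zero, numSquaresDvd_succ, pow_zero,
      numSquares_one, if_pos (by decide)]
    omega
  | m + 2 => by
    have ih := numSquaresDvd_succ_add hodd m
    have hpar : Even (m + 2 + 1) ↔ Even (m + 1) := by simp [Nat.even_add_one]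
    rw [numSquaresDvd_add_two hodd, numSquaresDvd_add_two hodd, if_congr hpar rfl rfl, pow_succ]
    linarith

lemma ncard_isSquare_add_residue_eq_zero (hodd : p ≠ 2) {m : ℕ} {c : ZMod (p ^ (m + 1))}
    (hc : residue p m c ≠ 0) :
    {a | IsSquare a ∧ IsSquare (c + a) ∧ residue p m a = 0}.ncard =
      if IsSquare (residue p m c) then numSquaresDvd p m else 0 := by
  have key : ∀ a, residue p m a = 0 → (IsSquare (c + a) ↔ IsSquare (residue p m c)) := by
    intro a ha
    have h : residue p m (c + a) = residue p m c := by rw [map_add, ha, add_zero]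
    rw [isSquare_iff_isSquare_residue hodd (h ▸ hc), h]
  split_ifs with hsq
  · rw [numSquaresDvd]
    congr 1
    ext a
    exact ⟨fun ⟨h₁, _, h₃⟩ => ⟨h₁, h₃⟩, fun ⟨h₁, h₃⟩ => ⟨h₁, (key a h₃).2 hsq, h₃⟩⟩
  · exact (Set.ncard_eq_zero (Set.toFinite _)).2 <|
      Set.eq_empty_of_forall_notMem fun a ⟨_, h₂, h₃⟩ => hsq ((key a h₃).1 h₂)

lemma tau_eq_ncard (n : ℤ) (c : ℕ) :
    tau n c = {a : ZMod c | IsSquare a ∧ IsSquare ((n : ZMod c) + a)}.ncard := by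
  have hinj : Function.Injective fun a : ZMod c => (a, (n : ZMod c) + a) :=
    fun _ _ h => congrArg Prod.fst h
  rw [tau, ← Set.ncard_image_of_injective _ hinj]
  congr 1
  ext ⟨a, b⟩
  simp only [IsTarget, Set.mem_ofPred_eq, Set.mem_image, Prod.mk.injEq]
  constructor
  · rintro ⟨ha, hb, rfl⟩
    exact ⟨a, ⟨ha, hb⟩, rfl, rfl⟩
  · rintro ⟨a, ⟨ha, hb⟩, rfl, rfl⟩
    exact ⟨ha, hb, rfl⟩

lemma preimage_residue_setOf_isSquare_add (hodd : p ≠ 2) {m : ℕ} (c : ZMod (p ^ (m + 1))) :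
    residue p m ⁻¹'
        {r | r ≠ 0 ∧ residue p m c + r ≠ 0 ∧ IsSquare r ∧ IsSquare (residue p m c + r)} =
      {a | IsSquare a ∧ IsSquare (c + a) ∧ residue p m a ≠ 0 ∧ residue p m (c + a) ≠ 0} := by
  ext a
  rw [Set.mem_preimage, Set.mem_ofPred_eq, Set.mem_ofPred_eq, ← map_add]
  constructor
  · rintro ⟨h₀, h₁, h₂, h₃⟩
    exact ⟨(isSquare_iff_isSquare_residue hodd h₀).2 h₂,
      (isSquare_iff_isSquare_residue hodd h₁).2 h₃, h₀, h₁⟩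
  · rintro ⟨h₂, h₃, h₀, h₁⟩
    exact ⟨h₀, h₁, (isSquare_iff_isSquare_residue hodd h₀).1 h₂,
      (isSquare_iff_isSquare_residue hodd h₁).1 h₃⟩

lemma tau_primePow_succ (hodd : p ≠ 2) {n : ℤ} (hn : (n : ZMod p) ≠ 0) (m : ℕ) :
    tau n (p ^ (m + 1)) =
      {r : ZMod p | r ≠ 0 ∧ (n : ZMod p) + r ≠ 0 ∧ IsSquare r ∧ IsSquare ((n : ZMod p) + r)}.ncard
          * p ^ m +
        ((if IsSquare (n : ZMod p) then 1 else 0) + if IsSquare (-(n : ZMod p)) then 1 else 0) *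
          numSquaresDvd p m := by
  set N : ZMod (p ^ (m + 1)) := (n : ZMod (p ^ (m + 1)))
  have hN : residue p m N = n := map_intCast _ _
  set S₀ := {a | IsSquare a ∧ IsSquare (N + a) ∧ residue p m a = 0}
  set S₁ := {a | IsSquare a ∧ IsSquare (N + a) ∧ residue p m (N + a) = 0}
  have hS₁ : S₁ =
      (fun b => -N + b) '' {b | IsSquare b ∧ IsSquare (-N + b) ∧ residue p m b = 0} := by
    rw [Set.image_add_left, neg_neg]
    ext a
    simp only [Set.mem_preimage, Set.mem_ofPred_eq, S₁, neg_add_cancel_left]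
    tauto
  have hres : ∀ a, residue p m a = 0 → residue p m (N + a) ≠ 0 := fun a ha => by
    rwa [map_add, ha, add_zero, hN]
  set P := residue p m ⁻¹'
    {r | r ≠ 0 ∧ residue p m N + r ≠ 0 ∧ IsSquare r ∧ IsSquare (residue p m N + r)} with hP
  have hPcard : P.ncard = _ := ncard_preimage_residue m _
  rw [preimage_residue_setOf_isSquare_add hodd] at hP
  have hsplit : {a | IsSquare a ∧ IsSquare (N + a)} = P ∪ (S₀ ∪ S₁) := by
    ext a
    have := hres a
    simp only [hP, Set.mem_ofPred_eq, Set.mem_union, S₀, S₁]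
    tauto
  have hdisj₀₁ : Disjoint S₀ S₁ := Set.disjoint_left.2 fun a h₀ h₁ => hres a h₀.2.2 h₁.2.2
  have hdisj : Disjoint P (S₀ ∪ S₁) := by
    rw [hP]
    exact Set.disjoint_union_right.2 ⟨Set.disjoint_left.2 fun a h h₀ => h.2.2.1 h₀.2.2,
      Set.disjoint_left.2 fun a h h₁ => h.2.2.2 h₁.2.2⟩
  rw [tau_eq_ncard, hsplit, Set.ncard_union_eq hdisj, Set.ncard_union_eq hdisj₀₁, hPcard,
    hS₁, Set.ncard_image_of_injective _ (add_right_injective _),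
    ncard_isSquare_add_residue_eq_zero hodd (by rwa [hN]),
    ncard_isSquare_add_residue_eq_zero hodd (by rwa [map_neg, hN, neg_ne_zero]), hN, map_neg, hN]
  split_ifs <;> ring

lemma legendreSym_one_add_div_two {a : ℤ} (ha : (a : ZMod p) ≠ 0) :
    (1 + legendreSym p a) / 2 = if IsSquare (a : ZMod p) then 1 else 0 := by
  split_ifs with h
  · rw [(legendreSym.eq_one_iff p ha).2 h]; rfl
  · rw [(legendreSym.eq_neg_one_iff p).2 h]; rfl

end PrimePower

theorem stmt_12 (p : ℕ) [Fact p.Prime] (hodd : p ≠ 2) (n : ℤ)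
    (hn : ¬ (p : ℤ) ∣ n) (k : ℕ) (hk : 1 ≤ k) :
    (Even k →
      (tau n (p ^ (k + 1)) : ℤ) =
        ((tau n (p ^ k) : ℤ) -
            ((1 + legendreSym p n) / 2 + (1 + legendreSym p (-n)) / 2)) * p +
          ((1 + legendreSym p n) / 2 + (1 + legendreSym p (-n)) / 2) *
            (((p : ℤ) + 1) / 2)) ∧
    (Odd k →
      (tau n (p ^ (k + 1)) : ℤ) =
        ((tau n (p ^ k) : ℤ) -
            ((1 + legendreSym p n) / 2 + (1 + legendreSym p (-n)) / 2)) * p +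
          ((1 + legendreSym p n) / 2 + (1 + legendreSym p (-n)) / 2)) := by
  obtain ⟨m, rfl⟩ : ∃ m, k = m + 1 := ⟨k - 1, by omega⟩
  have hn₀ : (n : ZMod p) ≠ 0 := by rwa [Ne, ZMod.intCast_zmod_eq_zero_iff_dvd]
  have hneg : ((-n : ℤ) : ZMod p) = -(n : ZMod p) := Int.cast_neg n
  have hrec : (numSquaresDvd p (m + 1) : ℤ) + p =
      p * numSquaresDvd p m + if Even (m + 1) then ((p : ℤ) + 1) / 2 else 1 := by
    have h := congrArg (Nat.cast : ℕ → ℤ) (numSquaresDvd_succ_add hodd m)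
    split_ifs at h ⊢ <;> push_cast at h <;> omega
  rw [legendreSym_one_add_div_two hn₀, legendreSym_one_add_div_two (by rwa [hneg, neg_ne_zero]),
    hneg, tau_primePow_succ hodd hn₀ m, tau_primePow_succ hodd hn₀ (m + 1)]
  push_cast
  set s : ℤ := (if IsSquare (n : ZMod p) then 1 else 0) + if IsSquare (-(n : ZMod p)) then 1 else 0
  refine ⟨fun he => ?_, fun ho => ?_⟩
  · rw [if_pos he] at hrec
    linear_combination s * hrec
  · rw [if_neg (Nat.not_even_iff_odd.2 ho)] at hrec
    linear_combination s * hrec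
end

section
/- There exists a constant C > 0 such that for every real B ≥ 3 and every integer n the following holds: let c be the product of all odd primes p ≤ B, and suppose gcd(n,c) = 1. Then (1/c) · ∏_{2 < p ≤ B, p prime} (τ(n,p) − (1 + (n/p))/2) ≤ C · 4^{−π(B)} · log B, where π(B) is the number of primes ≤ B and (n/p) is the Legendre symbol. -/
/-!
For an odd prime `p ∤ n`, writing `χ` for the quadratic character, the number of `a` with `a`
and `n + a` both squares is `(p + 1 + χ(n) + χ(-n)) / 4`: expand `[a is a square]` as
`(1 + χ(a) + [a = 0]) / 2` and use that the correlation `∑ₐ χ(a) χ(a + n)` is the Jacobi sum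
`J(χ, χ)`, up to the sign `χ(-1)`. Hence every local factor lies in `[0, (p + 1) / 4]`, and the
left-hand side is at most `4^{1-π(B)} ∏_{p ≤ B} (1 + 1/p)`. The last product is `O(log B)` by
Mertens' estimate `∑_{p ≤ N} 1/p ≤ log log N + O(1)`, obtained by discrete partial summation from
Chebyshev's bound `∑_{p ≤ N} log p / p ≤ log N + log 4`; the latter compares `∏ p ^ ⌊N/p⌋ ∣ N!`
with `N! ≤ N^N` and `θ(N) ≤ N log 4`.
-/

open Finset Real
open scoped Nat

section SquareCount

variable {F : Type*} [Field F] [Fintype F] [DecidableEq F]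

lemma sum_quadraticChar_mul_quadraticChar_add (hF : ringChar F ≠ 2) {u : F} (hu : u ≠ 0) :
    ∑ a : F, quadraticChar F a * quadraticChar F (a + u) = -1 := by
  set χ := quadraticChar F
  have hJ : ∑ x : F, χ x * χ (1 - x) = -χ (-1) := by
    have := jacobiSum_nontrivial_inv (quadraticChar_ne_one hF)
    rwa [(quadraticChar_isQuadratic F).inv, jacobiSum] at this
  calc ∑ a : F, χ a * χ (a + u)
      = ∑ x : F, χ (-u * x) * χ (-u * x + u) :=
        (Fintype.sum_equiv (Equiv.mulLeft₀ (-u) (neg_ne_zero.2 hu)) _ _ fun _ => rfl).symm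
    _ = χ (-1) * χ u ^ 2 * ∑ x : F, χ x * χ (1 - x) := by
        rw [mul_sum]
        refine sum_congr rfl fun x _ => ?_
        rw [show -u * x + u = u * (1 - x) by ring, show -u * x = -1 * u * x by ring]
        simp only [map_mul]
        ring
    _ = -1 := by
        rw [hJ, quadraticChar_sq_one hu]
        linear_combination -quadraticChar_sq_one (F := F) (neg_ne_zero.2 one_ne_zero)

open Classical in
lemma ite_isSquare_eq_one_add_quadraticChar (a : F) :
    (if IsSquare a then 2 else 0 : ℤ) = 1 + quadraticChar F a + if a = 0 then 1 else 0 := by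
  rcases eq_or_ne a 0 with rfl | ha
  · simp
  rcases quadraticChar_dichotomy ha with h | h
  · simp [(quadraticChar_one_iff_isSquare ha).1 h, h, ha]
  · simp [quadraticChar_neg_one_iff_not_isSquare.1 h, h, ha]

theorem four_mul_card_isSquare_and_isSquare_add (hF : ringChar F ≠ 2) {N : F} (hN : N ≠ 0) :
    4 * (Nat.card {a : F // IsSquare a ∧ IsSquare (N + a)} : ℤ)
      = Fintype.card F + 1 + quadraticChar F N + quadraticChar F (-N) := by
  classical
  set χ := quadraticChar F
  rw [Nat.card_eq_fintype_card, Fintype.card_subtype, natCast_card_filter, mul_sum]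
  have hpt : ∀ a : F, 4 * (if IsSquare a ∧ IsSquare (N + a) then 1 else 0 : ℤ)
      = (1 + χ a + if a = 0 then 1 else 0) * (1 + χ (N + a) + if N + a = 0 then 1 else 0) := by
    intro a
    rw [← ite_isSquare_eq_one_add_quadraticChar, ← ite_isSquare_eq_one_add_quadraticChar]
    split_ifs <;> simp_all
  simp only [hpt, add_eq_zero_iff_eq_neg', add_mul, mul_add, sum_add_distrib, mul_ite, ite_mul,
    mul_one, one_mul, mul_zero, zero_mul, sum_ite_eq', mem_univ, if_true]
  have hsum : ∑ x, χ x = 0 := quadraticChar_sum_zero hF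
  have hshift : ∑ x, χ (N + x) = 0 :=
    (Fintype.sum_equiv (Equiv.addLeft N) _ _ fun _ => rfl).trans hsum
  have hpair : ∑ x, χ x * χ (N + x) = -1 := by
    simpa only [add_comm N] using sum_quadraticChar_mul_quadraticChar_add hF hN
  simp only [hsum, hshift, hpair, neg_eq_zero, hN, if_false, add_zero,
    sum_const, card_univ, nsmul_eq_mul, mul_one]
  ring

end SquareCount

lemma tau_eq_card (n : ℤ) (c : ℕ) :
    tau n c = Nat.card {a : ZMod c // IsSquare a ∧ IsSquare ((n : ZMod c) + a)} := by
  rw [tau, ← Nat.card_coe_set_eq]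
  exact Nat.card_congr
    { toFun := fun x => ⟨x.1.1, x.2.1, x.2.2.2 ▸ x.2.2.1⟩
      invFun := fun a => ⟨(a, n + a), a.2.1, a.2.2, rfl⟩
      left_inv := by rintro ⟨⟨a, b⟩, -, -, h : (n : ZMod c) + a = b⟩; subst h; rfl
      right_inv := fun _ => rfl }

section OddPrime

variable {p : ℕ} [Fact p.Prime]

lemma four_mul_tau (hp2 : p ≠ 2) {n : ℤ} (hn : (n : ZMod p) ≠ 0) :
    4 * (tau n p : ℤ) = p + 1 + legendreSym p n + legendreSym p (-n) := by
  rw [tau_eq_card, four_mul_card_isSquare_and_isSquare_add (by rwa [ZMod.ringChar_zmod_n]) hn,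
    ZMod.card, legendreSym, legendreSym, Int.cast_neg]

lemma tau_sub_legendreSym_mem_Icc (hp2 : p ≠ 2) {n : ℤ} (hn : (n : ZMod p) ≠ 0) :
    (tau n p : ℝ) - ((1 + legendreSym p n : ℤ) : ℝ) / 2 ∈ Set.Icc 0 (((p : ℝ) + 1) / 4) := by
  have h4 : 4 * (tau n p : ℝ) = p + 1 + legendreSym p n + legendreSym p (-n) := by
    exact_mod_cast four_mul_tau hp2 hn
  have hp3 : (3 : ℝ) ≤ p := by exact_mod_cast (Fact.out : p.Prime).two_le.lt_of_ne' hp2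
  have hn' : ((-n : ℤ) : ZMod p) ≠ 0 := by rwa [Int.cast_neg, neg_ne_zero]
  rcases legendreSym.eq_one_or_neg_one p hn with h | h <;>
    rcases legendreSym.eq_one_or_neg_one p hn' with h' | h' <;>
    simp only [h, h'] at h4 ⊢ <;> push_cast at h4 ⊢ <;> constructor <;> linarith

end OddPrime

lemma Nat.pow_div_dvd_factorial {p : ℕ} (hp : 0 < p) (N : ℕ) : p ^ (N / p) ∣ N ! :=
  calc p ^ (N / p) ∣ (p !) ^ (N / p) := pow_dvd_pow_of_dvd (Nat.dvd_factorial hp le_rfl) _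
    _ = ∏ _i ∈ range (N / p), p ! := by rw [prod_const, card_range]
    _ ∣ (∑ _i ∈ range (N / p), p)! := Nat.prod_factorial_dvd_factorial_sum _ _
    _ ∣ N ! := Nat.factorial_dvd_factorial (by simpa using Nat.div_mul_le_self N p)

lemma Nat.prod_primesLE_pow_div_dvd_factorial (N : ℕ) : ∏ p ∈ primesLE N, p ^ (N / p) ∣ N ! :=
  prod_dvd_of_isRelPrime
    (fun _ hp _ hq hpq => coprime_iff_isRelPrime.1 <| Coprime.pow _ _ <|
      (coprime_primes (prime_of_mem_primesLE hp) (prime_of_mem_primesLE hq)).2 hpq)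
    fun _ hp => pow_div_dvd_factorial (prime_of_mem_primesLE hp).pos N

lemma sum_primesLE_div_mul_log_le (N : ℕ) :
    ∑ p ∈ N.primesLE, ((N / p : ℕ) : ℝ) * log p ≤ N * log N := by
  have hpos : 0 < ∏ p ∈ N.primesLE, p ^ (N / p) :=
    prod_pos fun p hp => pow_pos (Nat.prime_of_mem_primesLE hp).pos _
  calc ∑ p ∈ N.primesLE, ((N / p : ℕ) : ℝ) * log p
      = log ((∏ p ∈ N.primesLE, p ^ (N / p) : ℕ) : ℝ) := by
        rw [Nat.cast_prod,
          log_prod fun p hp => mod_cast (pow_pos (Nat.prime_of_mem_primesLE hp).pos _).ne']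
        simp only [Nat.cast_pow, Real.log_pow]
    _ ≤ log (N ! : ℝ) := log_le_log (mod_cast hpos)
        (mod_cast Nat.le_of_dvd N.factorial_pos N.prod_primesLE_pow_div_dvd_factorial)
    _ ≤ log ((N : ℝ) ^ N) := log_le_log (mod_cast N.factorial_pos) (mod_cast N.factorial_le_pow)
    _ = N * log N := Real.log_pow N N

theorem sum_primesLE_log_div_le (N : ℕ) :
    ∑ p ∈ N.primesLE, log p / p ≤ log N + log 4 := by
  rcases N.eq_zero_or_pos with rfl | hN
  · simp only [Nat.primesLE_zero, sum_empty, CharP.cast_eq_zero, log_zero, zero_add]; positivity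
  have hθ : ∑ p ∈ N.primesLE, log p ≤ N * log 4 := by
    rw [← Chebyshev.theta_eq_sum_primesLE_log, mul_comm]
    exact Chebyshev.theta_le_log4_mul_x N.cast_nonneg
  have hpt : ∀ p ∈ N.primesLE, N * (log p / p) ≤ ((N / p : ℕ) : ℝ) * log p + log p := by
    intro p hp
    have hdiv : (N : ℝ) / p ≤ (N / p : ℕ) + 1 := by
      rw [← Nat.floor_div_eq_div (K := ℝ)]; exact (Nat.lt_floor_add_one _).le
    calc N * (log p / p) = (N : ℝ) / p * log p := by ring
      _ ≤ ((N / p : ℕ) + 1) * log p := mul_le_mul_of_nonneg_right hdiv (log_natCast_nonneg p)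
      _ = _ := by ring
  refine le_of_mul_le_mul_left ?_ (show (0 : ℝ) < N from mod_cast hN)
  calc N * ∑ p ∈ N.primesLE, log p / p
      ≤ ∑ p ∈ N.primesLE, (((N / p : ℕ) : ℝ) * log p + log p) := by
        rw [mul_sum]; exact sum_le_sum hpt
    _ ≤ N * log N + N * log 4 := by
        rw [sum_add_distrib]; exact add_le_add (sum_primesLE_div_mul_log_le N) hθ
    _ = N * (log N + log 4) := by ring

lemma mul_inv_sub_inv_le_log_sub_log {a b : ℝ} (ha : 0 < a) (hb : 0 < b) :
    a * (a⁻¹ - b⁻¹) ≤ log b - log a := by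
  have h := one_sub_inv_le_log_of_pos (div_pos hb ha)
  rw [log_div hb.ne' ha.ne', inv_div] at h
  calc a * (a⁻¹ - b⁻¹) = 1 - a / b := by field_simp
    _ ≤ log b - log a := h

/-- Discrete Abel summation of `(log p / p) * (log p)⁻¹` against Chebyshev's bound. -/
theorem sum_primesLE_inv_le {N : ℕ} (hN : 2 ≤ N) :
    ∑ p ∈ N.primesLE, (p : ℝ)⁻¹ ≤ (∑ p ∈ N.primesLE, log p / p) / log N
      + (log (log N) - log (log 2)) + log 4 * ((log 2)⁻¹ - (log N)⁻¹) := by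
  induction N, hN using Nat.le_induction with
  | base =>
    rw [show Nat.primesLE 2 = {2} by decide]
    have : log 2 ≠ 0 := (log_pos one_lt_two).ne'
    simp only [sum_singleton, Nat.cast_ofNat, sub_self, mul_zero, add_zero]
    exact le_of_eq (by field_simp)
  | succ N hN ih =>
    have hlogN : 0 < log N := log_pos (by exact_mod_cast hN)
    have hlogN1 : 0 < log (N + 1 : ℕ) := log_pos (by exact_mod_cast (by omega : 1 < N + 1))
    have hmono : 0 ≤ (log N)⁻¹ - (log (N + 1 : ℕ))⁻¹ :=
      sub_nonneg.2 (inv_anti₀ hlogN (log_le_log (by positivity) (by norm_cast; omega)))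
    have key := mul_inv_sub_inv_le_log_sub_log hlogN hlogN1
    have hMN := mul_le_mul_of_nonneg_right (sum_primesLE_log_div_le N) hmono
    have hstep : (∑ p ∈ N.primesLE, log p / p) / log N
        ≤ (∑ p ∈ N.primesLE, log p / p) / log (N + 1 : ℕ)
          + (log (log (N + 1 : ℕ)) - log (log N)) + log 4 * ((log N)⁻¹ - (log (N + 1 : ℕ))⁻¹) := by
      rw [div_eq_mul_inv, div_eq_mul_inv]
      nlinarith
    rw [Nat.primesLE_succ]
    split_ifs with hp
    · have hnot : N + 1 ∉ N.primesLE := fun h => by have := Nat.le_of_mem_primesLE h; omega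
      rw [sum_insert hnot, sum_insert hnot, add_div, div_div_cancel_left' hlogN1.ne']
      linarith
    · linarith

theorem exists_sum_primesLE_inv_le_log_log :
    ∃ C : ℝ, ∀ N : ℕ, 2 ≤ N → ∑ p ∈ N.primesLE, (p : ℝ)⁻¹ ≤ log (log N) + C := by
  refine ⟨1 + 2 * (log 4 / log 2) - log (log 2), fun N hN => ?_⟩
  have hlog2 : 0 < log 2 := log_pos one_lt_two
  have hlog2N : log 2 ≤ log N := log_le_log two_pos (mod_cast hN)
  have hlogN : 0 < log N := hlog2.trans_le hlog2N
  have hlog4 : 0 ≤ log 4 := log_nonneg (by norm_num)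
  have hinv : (log N)⁻¹ ≤ (log 2)⁻¹ := inv_anti₀ hlog2 hlog2N
  have hfirst : (∑ p ∈ N.primesLE, log p / p) / log N ≤ 1 + log 4 / log 2 := by
    calc (∑ p ∈ N.primesLE, log p / p) / log N ≤ (log N + log 4) / log N :=
          div_le_div_of_nonneg_right (sum_primesLE_log_div_le N) hlogN.le
      _ = 1 + log 4 * (log N)⁻¹ := by field_simp
      _ ≤ 1 + log 4 / log 2 := by rw [div_eq_mul_inv]; gcongr
  have hthird : log 4 * ((log 2)⁻¹ - (log N)⁻¹) ≤ log 4 / log 2 := by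
    rw [div_eq_mul_inv]
    exact mul_le_mul_of_nonneg_left (sub_le_self _ (inv_nonneg.2 hlogN.le)) hlog4
  linarith [sum_primesLE_inv_le hN]

theorem exists_prod_primesLE_one_add_inv_le :
    ∃ C : ℝ, 0 < C ∧ ∀ N : ℕ, 2 ≤ N → ∏ p ∈ N.primesLE, (1 + (p : ℝ)⁻¹) ≤ C * log N := by
  obtain ⟨C, hC⟩ := exists_sum_primesLE_inv_le_log_log
  refine ⟨exp C, exp_pos C, fun N hN => ?_⟩
  have hlogN : 0 < log N := log_pos (by exact_mod_cast hN)
  calc ∏ p ∈ N.primesLE, (1 + (p : ℝ)⁻¹) ≤ ∏ p ∈ N.primesLE, exp (p : ℝ)⁻¹ :=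
        prod_le_prod (fun p _ => by positivity) fun p _ => by linarith [add_one_le_exp (p : ℝ)⁻¹]
    _ = exp (∑ p ∈ N.primesLE, (p : ℝ)⁻¹) := (exp_sum _ _).symm
    _ ≤ exp (log (log N) + C) := exp_le_exp.2 (hC N hN)
    _ = exp C * log N := by rw [exp_add, exp_log hlogN, mul_comm]

lemma Nat.filter_range_prime_ne_two (N : ℕ) :
    (range (N + 1)).filter (fun p => p.Prime ∧ p ≠ 2) = N.primesLE.erase 2 := by
  ext p
  simp only [mem_filter, mem_range, mem_erase, Nat.mem_primesLE, Nat.lt_succ_iff]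
  tauto

lemma Nat.filter_range_prime_two_lt (N : ℕ) :
    (range (N + 1)).filter (fun p => p.Prime ∧ 2 < p) = N.primesLE.erase 2 := by
  rw [← Nat.filter_range_prime_ne_two]
  exact filter_congr fun p _ => and_congr_right fun hp => hp.two_le.lt_iff_ne'

lemma intCast_zmod_ne_zero_of_gcd_eq_one {n : ℤ} {c p : ℕ} (hp : p ≠ 1) (hpc : p ∣ c)
    (h : Int.gcd n c = 1) : (n : ZMod p) ≠ 0 := by
  rw [Ne, ZMod.intCast_zmod_eq_zero_iff_dvd]
  intro hpn
  exact hp (Nat.dvd_one.1 (h ▸ Int.dvd_gcd hpn (Int.natCast_dvd_natCast.2 hpc)))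

lemma prod_tau_sub_legendreSym_le {S : Finset ℕ} (hS : ∀ p ∈ S, p.Prime ∧ p ≠ 2) {n : ℤ}
    (hn : Int.gcd n (∏ p ∈ S, p : ℕ) = 1) :
    (1 / ((∏ p ∈ S, p : ℕ) : ℝ)) * ∏ p ∈ S, (if hp : p.Prime then
        (tau n p : ℝ) - ((1 + @legendreSym p ⟨hp⟩ n : ℤ) : ℝ) / 2 else 1)
      ≤ (4 ^ #S)⁻¹ * ∏ p ∈ S, (1 + (p : ℝ)⁻¹) := by
  have hfactor : ∀ p ∈ S, (if hp : p.Prime then (tau n p : ℝ) -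
      ((1 + @legendreSym p ⟨hp⟩ n : ℤ) : ℝ) / 2 else 1) ∈ Set.Icc 0 (((p : ℝ) + 1) / 4) := by
    intro p hp
    obtain ⟨hpp, hp2⟩ := hS p hp
    have := Fact.mk hpp
    rw [dif_pos hpp]
    exact tau_sub_legendreSym_mem_Icc hp2
      (intCast_zmod_ne_zero_of_gcd_eq_one hpp.one_lt.ne' (dvd_prod_of_mem _ hp) hn)
  have hscale : ∀ p ∈ S, (p : ℝ)⁻¹ * (((p : ℝ) + 1) / 4) = 4⁻¹ * (1 + (p : ℝ)⁻¹) := by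
    intro p hp
    have : (p : ℝ) ≠ 0 := mod_cast (hS p hp).1.ne_zero
    field_simp
  calc _ ≤ (1 / ((∏ p ∈ S, p : ℕ) : ℝ)) * ∏ p ∈ S, (((p : ℝ) + 1) / 4) :=
        mul_le_mul_of_nonneg_left (prod_le_prod (fun p hp => (hfactor p hp).1)
          fun p hp => (hfactor p hp).2) (by positivity)
    _ = (4 ^ #S)⁻¹ * ∏ p ∈ S, (1 + (p : ℝ)⁻¹) := by
        rw [Nat.cast_prod, one_div, ← prod_inv_distrib, ← prod_mul_distrib, prod_congr rfl hscale,
          prod_mul_distrib, prod_const, inv_pow]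

theorem stmt_18 :
    ∃ C : ℝ, 0 < C ∧ ∀ B : ℝ, 3 ≤ B → ∀ n : ℤ, ∀ c : ℕ,
      c = ∏ p ∈ (Finset.range (⌊B⌋₊ + 1)).filter (fun p => p.Prime ∧ p ≠ 2), p →
      Int.gcd n c = 1 →
      (1 / (c : ℝ)) *
          ∏ p ∈ (Finset.range (⌊B⌋₊ + 1)).filter (fun p => p.Prime ∧ 2 < p),
            (if hp : p.Prime then
              (tau n p : ℝ) - ((1 + @legendreSym p ⟨hp⟩ n : ℤ) : ℝ) / 2
            else 1) ≤
        C * ((4 : ℝ) ^ Nat.primeCounting ⌊B⌋₊)⁻¹ * Real.log B := by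
  obtain ⟨C, hC, hprod⟩ := exists_prod_primesLE_one_add_inv_le
  refine ⟨4 * C, by positivity, fun B hB n c hc hcop => ?_⟩
  set N := ⌊B⌋₊
  have hN : 3 ≤ N := Nat.le_floor (by exact_mod_cast hB)
  rw [Nat.filter_range_prime_ne_two] at hc
  subst hc
  rw [Nat.filter_range_prime_two_lt]
  set S := N.primesLE.erase 2
  have hcard : #S + 1 = Nat.primeCounting N := by
    rw [card_erase_add_one (Nat.mem_primesLE.2 ⟨by omega, Nat.prime_two⟩),
      Nat.primesLE_card_eq_primeCounting]
  have hlog : log N ≤ log B := log_le_log (by positivity) (Nat.floor_le (by linarith))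
  calc _ ≤ (4 ^ #S)⁻¹ * ∏ p ∈ S, (1 + (p : ℝ)⁻¹) := prod_tau_sub_legendreSym_le
          (fun p hp => ⟨Nat.prime_of_mem_primesLE (mem_of_mem_erase hp), ne_of_mem_erase hp⟩) hcop
    _ ≤ (4 ^ #S)⁻¹ * ∏ p ∈ N.primesLE, (1 + (p : ℝ)⁻¹) :=
        mul_le_mul_of_nonneg_left (prod_le_prod_of_subset_of_one_le (erase_subset _ _)
          (fun _ _ => by positivity) fun _ _ _ => le_add_of_nonneg_right (by positivity))
          (by positivity)
    _ ≤ (4 ^ #S)⁻¹ * (C * log B) := mul_le_mul_of_nonneg_left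
          ((hprod N (by omega)).trans (mul_le_mul_of_nonneg_left hlog hC.le)) (by positivity)
    _ = 4 * C * ((4 : ℝ) ^ Nat.primeCounting N)⁻¹ * log B := by
        rw [← hcard, pow_succ]
        field_simp
end
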